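/- arXiv:1303.0457 — 6 statements merged into one kernel-verified Lean document; each statement's English description precedes it below -/
import Mathlib

section
/- Fix a real number ξ ≥ 0. Then the function ν ↦ |cosh(√(ξ+iν))| (for ν real, where √ denotes the principal complex square root) is minimized at ν = 0, with minimum value cosh(√ξ); moreover it is monotone nondecreasing in |ν|. -/
/-!
Write `√(ξ + iν) = σ + iχ` and `r = |ξ + iν|`. Then `|cosh (σ + iχ)|² = sinh² σ + cos² χ` with
`σ² = (r + ξ)/2` and `χ² = (r - ξ)/2`, so as `|ν|`, hence `r`, grows, `σ²` and `χ²` grow by the same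
amount. From `sinh² u - sinh² v = sinh (u + v) sinh (u - v)`, its `sin` analogue and
`|sin x| ≤ |x| ≤ |sinh x|`, `sinh² √t` gains at least as much as `t` does, while `cos² √t` loses
at most that much, so the sum cannot decrease. At `ν = 0` it equals `sinh² √ξ + 1 = cosh² √ξ`.
-/

namespace Real

theorem sinh_sq_sub_sinh_sq (x y : ℝ) :
    sinh x ^ 2 - sinh y ^ 2 = sinh (x + y) * sinh (x - y) := by
  rw [sinh_add, sinh_sub]
  linear_combination sinh y ^ 2 * cosh_sq x - sinh x ^ 2 * cosh_sq y

theorem sin_sq_sub_sin_sq (x y : ℝ) :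
    sin x ^ 2 - sin y ^ 2 = sin (x + y) * sin (x - y) := by
  rw [sin_add, sin_sub]
  linear_combination sin y ^ 2 * sin_sq_add_cos_sq x - sin x ^ 2 * sin_sq_add_cos_sq y

theorem monotoneOn_sinh_sqrt_sq_sub : MonotoneOn (fun t ↦ sinh √t ^ 2 - t) (Set.Ici 0) := by
  intro s hs t ht hst
  obtain ⟨v, hv, rfl⟩ : ∃ v, 0 ≤ v ∧ v ^ 2 = s := ⟨√s, sqrt_nonneg s, sq_sqrt hs⟩
  obtain ⟨u, hu, rfl⟩ : ∃ u, 0 ≤ u ∧ u ^ 2 = t := ⟨√t, sqrt_nonneg t, sq_sqrt ht⟩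
  have hvu : v ≤ u := (pow_le_pow_iff_left₀ hv hu two_ne_zero).1 hst
  have key : (u + v) * (u - v) ≤ sinh (u + v) * sinh (u - v) :=
    mul_le_mul (self_le_sinh_iff.2 (by linarith)) (self_le_sinh_iff.2 (by linarith))
      (by linarith) (sinh_nonneg_iff.2 (by linarith))
  simp only [sqrt_sq hv, sqrt_sq hu]
  linarith [sinh_sq_sub_sinh_sq u v]

theorem monotoneOn_cos_sqrt_sq_add : MonotoneOn (fun t ↦ cos √t ^ 2 + t) (Set.Ici 0) := by
  intro s hs t ht hst
  obtain ⟨v, hv, rfl⟩ : ∃ v, 0 ≤ v ∧ v ^ 2 = s := ⟨√s, sqrt_nonneg s, sq_sqrt hs⟩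
  obtain ⟨u, hu, rfl⟩ : ∃ u, 0 ≤ u ∧ u ^ 2 = t := ⟨√t, sqrt_nonneg t, sq_sqrt ht⟩
  have hvu : v ≤ u := (pow_le_pow_iff_left₀ hv hu two_ne_zero).1 hst
  have key : sin (u + v) * sin (u - v) ≤ (u + v) * (u - v) := calc
    sin (u + v) * sin (u - v) ≤ |sin (u + v)| * |sin (u - v)| := by
      rw [← abs_mul]; exact le_abs_self _
    _ ≤ |u + v| * |u - v| := mul_le_mul abs_sin_le_abs abs_sin_le_abs (abs_nonneg _) (abs_nonneg _)
    _ = (u + v) * (u - v) := by rw [abs_of_nonneg (by linarith), abs_of_nonneg (by linarith)]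
  simp only [sqrt_sq hv, sqrt_sq hu]
  linarith [sin_sq_sub_sin_sq u v, sin_sq_add_cos_sq u, sin_sq_add_cos_sq v]

end Real

namespace Complex

theorem sq_norm_cosh (z : ℂ) : ‖cosh z‖ ^ 2 = Real.sinh z.re ^ 2 + Real.cos z.im ^ 2 := by
  conv_lhs => rw [← re_add_im z]
  rw [cosh_add, cosh_mul_I, sinh_mul_I, ← ofReal_cosh, ← ofReal_sinh, ← ofReal_cos, ← ofReal_sin,
    ← mul_assoc, ← ofReal_mul, ← ofReal_mul, Complex.sq_norm, normSq_add_mul_I]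
  linear_combination Real.cos z.im ^ 2 * Real.cosh_sq z.re
    + Real.sinh z.re ^ 2 * Real.sin_sq_add_cos_sq z.im

theorem sq_norm_cosh_cpow_inv_two (z : ℂ) :
    ‖cosh (z ^ (2⁻¹ : ℂ))‖ ^ 2
      = Real.sinh √((‖z‖ + z.re) / 2) ^ 2 + Real.cos √((‖z‖ - z.re) / 2) ^ 2 := by
  rw [sq_norm_cosh, cpow_inv_two_re, ← Real.cos_abs, abs_cpow_inv_two_im]

theorem norm_cosh_cpow_inv_two_le_of_re_eq {z w : ℂ} (hre : z.re = w.re) (hnorm : ‖z‖ ≤ ‖w‖) :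
    ‖cosh (z ^ (2⁻¹ : ℂ))‖ ≤ ‖cosh (w ^ (2⁻¹ : ℂ))‖ := by
  rw [← pow_le_pow_iff_left₀ (norm_nonneg _) (norm_nonneg _) two_ne_zero,
    sq_norm_cosh_cpow_inv_two, sq_norm_cosh_cpow_inv_two]
  obtain ⟨hz₁, hz₂⟩ := abs_le.1 (abs_re_le_norm z)
  have hsinh : Real.sinh √((‖z‖ + z.re) / 2) ^ 2 - (‖z‖ + z.re) / 2
      ≤ Real.sinh √((‖w‖ + w.re) / 2) ^ 2 - (‖w‖ + w.re) / 2 :=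
    Real.monotoneOn_sinh_sqrt_sq_sub (Set.mem_Ici.2 (by linarith)) (Set.mem_Ici.2 (by linarith))
      (by linarith)
  have hcos : Real.cos √((‖z‖ - z.re) / 2) ^ 2 + (‖z‖ - z.re) / 2
      ≤ Real.cos √((‖w‖ - w.re) / 2) ^ 2 + (‖w‖ - w.re) / 2 :=
    Real.monotoneOn_cos_sqrt_sq_add (Set.mem_Ici.2 (by linarith)) (Set.mem_Ici.2 (by linarith))
      (by linarith)
  linarith

end Complex

open Complex

/-- For `ξ ≥ 0`, the function `ν ↦ |cosh (√(ξ + iν))|` (principal square root) attains its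
minimum `cosh √ξ` at `ν = 0` and is nondecreasing in `|ν|`. -/
theorem abs_cosh_sqrt_min_nonneg (ξ : ℝ) (hξ : 0 ≤ ξ) :
    (‖Complex.cosh (((ξ : ℂ) + (0 : ℝ) * Complex.I) ^ (1 / 2 : ℂ))‖
      = Real.cosh (Real.sqrt ξ)) ∧
    (∀ ν : ℝ, Real.cosh (Real.sqrt ξ)
      ≤ ‖Complex.cosh (((ξ : ℂ) + ν * Complex.I) ^ (1 / 2 : ℂ))‖) ∧
    (∀ ν₁ ν₂ : ℝ, |ν₁| ≤ |ν₂| →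
      ‖Complex.cosh (((ξ : ℂ) + ν₁ * Complex.I) ^ (1 / 2 : ℂ))‖
        ≤ ‖Complex.cosh (((ξ : ℂ) + ν₂ * Complex.I) ^ (1 / 2 : ℂ))‖) := by
  have hmono : ∀ ν₁ ν₂ : ℝ, |ν₁| ≤ |ν₂| →
      ‖cosh (((ξ : ℂ) + ν₁ * I) ^ (1 / 2 : ℂ))‖ ≤ ‖cosh (((ξ : ℂ) + ν₂ * I) ^ (1 / 2 : ℂ))‖ := by
    intro ν₁ ν₂ hν
    rw [one_div]
    refine norm_cosh_cpow_inv_two_le_of_re_eq (by simp) ?_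
    rw [norm_add_mul_I, norm_add_mul_I]
    exact Real.sqrt_le_sqrt (add_le_add_right (sq_le_sq.2 hν) _)
  have hzero : ‖cosh (((ξ : ℂ) + (0 : ℝ) * I) ^ (1 / 2 : ℂ))‖ = Real.cosh √ξ := by
    rw [ofReal_zero, zero_mul, add_zero, Real.sqrt_eq_rpow, ← ofReal_one, ← ofReal_ofNat,
      ← ofReal_div, ← ofReal_cpow hξ, ← ofReal_cosh, norm_real,
      Real.norm_of_nonneg (Real.cosh_pos _).le]
  exact ⟨hzero, fun ν ↦ hzero ▸ hmono 0 ν (by simp), hmono⟩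
end

section
/- Let 0 ≤ θ ≤ π/2 and let φ, α be real with α > 0, and set x = cos(θ)·cosh(u+iφ) for a real number u. If cosh(√(λ+u²)) = x for some complex λ (with √ the principal square root), then Re λ ≤ 0. Equivalently, if Re λ = α > 0 then |cosh(√(λ+u²)) − cos(θ)·cosh(u+iφ)| ≥ α/2. -/
/-!
Put `z = √(λ + u²)`, so `(Re z)² - (Im z)² = Re λ + u²`. As `t ↦ cosh t - t²/2` is increasing
on `[0, ∞)` (its derivative is `sinh t - t`), so is `t ↦ cosh² t - t²`; together with
`|cosh z|² = cosh² (Re z) - sin² (Im z)` and `sin² y ≤ y²` this gives `|cosh z| ≥ cosh √(Re λ + u²)`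
when `Re λ ≥ 0`. On the other side `|cos θ · cosh (u + iφ)| ≤ cosh u`, and the monotonicity once
more gives `cosh √(Re λ + u²) - cosh u ≥ Re λ / 2`.
-/

open Real

namespace Real

theorem sq_sub_sq_div_two_le_cosh_sub_cosh {a b : ℝ} (hb : 0 ≤ b) (hab : b ≤ a) :
    (a ^ 2 - b ^ 2) / 2 ≤ cosh a - cosh b := by
  have hp : 0 ≤ (a + b) / 2 := by linarith
  have hq : 0 ≤ (a - b) / 2 := by linarith
  have h₁ : (a + b) / 2 ≤ sinh ((a + b) / 2) := self_le_sinh_iff.2 hp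
  have h₂ : (a - b) / 2 ≤ sinh ((a - b) / 2) := self_le_sinh_iff.2 hq
  have hprod : cosh a - cosh b = 2 * sinh ((a + b) / 2) * sinh ((a - b) / 2) := by
    rw [show a = (a + b) / 2 + (a - b) / 2 by ring, show b = (a + b) / 2 - (a - b) / 2 by ring,
      cosh_add, cosh_sub]
    ring_nf
  nlinarith [mul_le_mul h₁ h₂ hq (hp.trans h₁)]

theorem sq_sub_sq_le_cosh_sq_sub_cosh_sq {a b : ℝ} (hb : 0 ≤ b) (hab : b ≤ a) :
    a ^ 2 - b ^ 2 ≤ cosh a ^ 2 - cosh b ^ 2 := by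
  have h := sq_sub_sq_div_two_le_cosh_sub_cosh (a := 2 * a) (b := 2 * b) (by linarith) (by linarith)
  rw [cosh_two_mul, cosh_two_mul, sinh_sq, sinh_sq] at h
  linarith

end Real

namespace Complex

theorem norm_cosh_sq (z : ℂ) : ‖cosh z‖ ^ 2 = Real.cosh z.re ^ 2 - Real.sin z.im ^ 2 := by
  have hcosh : cosh z = (Real.cosh z.re * Real.cos z.im : ℝ)
      + (Real.sinh z.re * Real.sin z.im : ℝ) * I := by
    conv_lhs => rw [← re_add_im z]
    rw [cosh_add, cosh_mul_I, sinh_mul_I, ← ofReal_cosh, ← ofReal_sinh, ← ofReal_cos,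
      ← ofReal_sin]
    push_cast
    ring
  rw [hcosh, Complex.sq_norm, normSq_add_mul_I]
  nlinarith [Real.sin_sq_add_cos_sq z.im, Real.cosh_sq_sub_sinh_sq z.re]

theorem norm_cosh_le (z : ℂ) : ‖cosh z‖ ≤ Real.cosh z.re := by
  refine (pow_le_pow_iff_left₀ (norm_nonneg _) (Real.cosh_pos _).le two_ne_zero).1 ?_
  rw [norm_cosh_sq]
  nlinarith [sq_nonneg (Real.sin z.im)]

theorem cosh_le_norm_cosh {z : ℂ} {s : ℝ} (hs : 0 ≤ s) (h : s ^ 2 ≤ (z ^ 2).re) :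
    Real.cosh s ≤ ‖cosh z‖ := by
  have hre : (z ^ 2).re = |z.re| ^ 2 - z.im ^ 2 := by rw [sq_abs, sq, mul_re]; ring
  have hs_le : s ≤ |z.re| :=
    (pow_le_pow_iff_left₀ hs (abs_nonneg _) two_ne_zero).1 (by nlinarith [sq_nonneg z.im])
  have hcosh := Real.sq_sub_sq_le_cosh_sq_sub_cosh_sq hs hs_le
  rw [Real.cosh_abs] at hcosh
  refine (pow_le_pow_iff_left₀ (Real.cosh_pos _).le (norm_nonneg _) two_ne_zero).1 ?_
  rw [norm_cosh_sq]
  nlinarith [Real.sin_sq_le_sq (x := z.im)]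

end Complex

theorem re_div_two_le_norm_cosh_sqrt_sub (lam : ℂ) (u : ℝ) {w : ℂ} (hw : ‖w‖ ≤ Real.cosh u) :
    lam.re / 2 ≤ ‖Complex.cosh ((lam + (u : ℂ) ^ 2) ^ (1 / 2 : ℂ)) - w‖ := by
  rcases le_or_gt lam.re 0 with hneg | hpos
  · linarith [norm_nonneg (Complex.cosh ((lam + (u : ℂ) ^ 2) ^ (1 / 2 : ℂ)) - w)]
  have hz_sq : (((lam + (u : ℂ) ^ 2) ^ (1 / 2 : ℂ)) ^ 2).re = lam.re + u ^ 2 := by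
    rw [show (1 / 2 : ℂ) = (2 : ℂ)⁻¹ by norm_num, Complex.cpow_ofNat_inv_pow]
    simp [← Complex.ofReal_pow]
  set z := (lam + (u : ℂ) ^ 2) ^ (1 / 2 : ℂ)
  set s := √(lam.re + u ^ 2)
  have hs_sq : s ^ 2 = lam.re + u ^ 2 := sq_sqrt (by positivity)
  have hu_le : |u| ≤ s :=
    (pow_le_pow_iff_left₀ (abs_nonneg _) (sqrt_nonneg _) two_ne_zero).1 (by rw [sq_abs]; linarith)
  calc lam.re / 2 = (s ^ 2 - |u| ^ 2) / 2 := by rw [hs_sq, sq_abs]; ring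
    _ ≤ Real.cosh s - Real.cosh |u| := sq_sub_sq_div_two_le_cosh_sub_cosh (abs_nonneg u) hu_le
    _ ≤ ‖Complex.cosh z‖ - ‖w‖ := by
      rw [Real.cosh_abs]
      gcongr
      exact Complex.cosh_le_norm_cosh (sqrt_nonneg _) (hs_sq.trans hz_sq.symm).le
    _ ≤ ‖Complex.cosh z - w‖ := norm_sub_norm_le _ _

theorem re_nonpos_of_cosh_eq_general (θ φ u α : ℝ) (lam : ℂ) :
    (Complex.cosh ((lam + (u : ℂ) ^ 2) ^ (1 / 2 : ℂ))
        = (Real.cos θ : ℂ) * Complex.cosh (u + φ * Complex.I) → lam.re ≤ 0) ∧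
    (lam.re = α →
      α / 2 ≤ ‖(Complex.cosh ((lam + (u : ℂ) ^ 2) ^ (1 / 2 : ℂ))
        - (Real.cos θ : ℂ) * Complex.cosh (u + φ * Complex.I))‖) := by
  have hw : ‖(Real.cos θ : ℂ) * Complex.cosh (u + φ * Complex.I)‖ ≤ Real.cosh u :=
    calc ‖(Real.cos θ : ℂ) * Complex.cosh (u + φ * Complex.I)‖
        = |Real.cos θ| * ‖Complex.cosh (u + φ * Complex.I)‖ := by
          rw [norm_mul, Complex.norm_real, norm_eq_abs]
      _ ≤ 1 * Real.cosh u := by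
          gcongr
          · exact abs_cos_le_one θ
          · simpa using Complex.norm_cosh_le (u + φ * Complex.I)
      _ = Real.cosh u := one_mul _
  have key := re_div_two_le_norm_cosh_sqrt_sub lam u hw
  refine ⟨fun heq => ?_, fun hre => hre ▸ key⟩
  rw [heq, sub_self, norm_zero] at key
  linarith

/-- If `cosh √(λ+u²) = cos θ · cosh (u + iφ)` then `Re λ ≤ 0`; equivalently, if
`Re λ = α > 0` then the difference has absolute value at least `α/2`. -/
theorem re_nonpos_of_cosh_eq (θ φ u α : ℝ) (hθ₀ : 0 ≤ θ) (hθ₁ : θ ≤ π / 2)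
    (hα : 0 < α) (lam : ℂ) :
    (Complex.cosh ((lam + (u : ℂ) ^ 2) ^ (1 / 2 : ℂ))
        = (Real.cos θ : ℂ) * Complex.cosh (u + φ * Complex.I) → lam.re ≤ 0) ∧
    (lam.re = α →
      α / 2 ≤ ‖(Complex.cosh ((lam + (u : ℂ) ^ 2) ^ (1 / 2 : ℂ))
        - (Real.cos θ : ℂ) * Complex.cosh (u + φ * Complex.I))‖) :=
  re_nonpos_of_cosh_eq_general θ φ u α lam
end

section
/- For each integer k ≥ 0 define q_k(A) = ∫₀¹ (1−u)^k / √(A²−u) du, for real A > 1. Then the k-th derivative of q_k satisfies q_k^{(k)}(A) = (−1)^k · 2^{k+1} · k! / (k+1) · (A − √(A²−1))^{k+1}. -/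
/-!
The substitution `u = 2At - t² = A² - (A - t)²` maps `[0, x]` onto `[0, 1]`, where
`x = A - √(A² - 1)` is the smaller root of `t² - 2At + 1`, and turns `q_k` into
`2 ∫₀ˣ (t² - 2At + 1)ᵏ dt`. Differentiating `∫₀ˣ tʲ (t² - 2At + 1)ⁿ dt` in `A` produces no boundary
term, since the integrand vanishes at the root `x`, so each derivative lowers `n` by one and
raises `j` by one, at the cost of a factor `-2n`. After `k` steps only
`(-2)ᵏ k! ∫₀ˣ tᵏ dt = (-2)ᵏ k! xᵏ⁺¹ / (k + 1)` remains.
-/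

open intervalIntegral Set Function ContinuousLinearMap Nat

section ParametricIntegral

variable {g g' : ℝ → ℝ → ℝ}

theorem hasDerivAt_parametric_intervalIntegral (hg : Continuous (uncurry g))
    (hg' : Continuous (uncurry g')) (hderiv : ∀ a t, HasDerivAt (g · t) (g' a t) a)
    (α β a₀ : ℝ) :
    HasDerivAt (fun a => ∫ t in α..β, g a t) (∫ t in α..β, g' a₀ t) a₀ := by
  obtain ⟨C, hC⟩ := (isCompact_Icc.prod isCompact_uIcc :
    IsCompact (Icc (a₀ - 1) (a₀ + 1) ×ˢ uIcc α β)).exists_bound_of_continuousOn hg'.continuousOn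
  refine (hasDerivAt_integral_of_dominated_loc_of_deriv_le (bound := fun _ => C)
    (Icc_mem_nhds (sub_one_lt a₀) (lt_add_one a₀))
    (.of_forall fun a => (hg.uncurry_left a).aestronglyMeasurable)
    ((hg.uncurry_left a₀).intervalIntegrable _ _) (hg'.uncurry_left a₀).aestronglyMeasurable
    ?_ intervalIntegrable_const (.of_forall fun t _ a _ => hderiv a t)).2
  exact .of_forall fun t ht a ha => hC (a, t) ⟨ha, uIoc_subset_uIcc ht⟩

theorem hasDerivAt_parametric_intervalIntegral_upper (hg : Continuous (uncurry g))
    (hg' : Continuous (uncurry g')) (hderiv : ∀ a t, HasDerivAt (g · t) (g' a t) a)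
    {x : ℝ → ℝ} {x' a₀ : ℝ} (hx : HasDerivAt x x' a₀) (α : ℝ) :
    HasDerivAt (fun a => ∫ t in α..x a, g a t)
      ((∫ t in α..x a₀, g' a₀ t) + x' * g a₀ (x a₀)) a₀ := by
  have hcont : ∀ {F : ℝ × ℝ → ℝ}, Continuous F →
      Continuous fun p => smulRight (1 : ℝ →L[ℝ] ℝ) (F p) := fun hF =>
    (smulRightL ℝ ℝ ℝ 1).continuous.comp hF
  have hG := hasStrictFDerivAt_uncurry_coprod (u := (a₀, x a₀))
    (f := fun a y => ∫ t in α..y, g a t)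
    (f₁ := fun a y => smulRight (1 : ℝ →L[ℝ] ℝ) (∫ t in α..y, g' a t))
    (f₂ := fun a y => smulRight (1 : ℝ →L[ℝ] ℝ) (g a y))
    (.of_forall fun v =>
      (hasDerivAt_parametric_intervalIntegral hg hg' hderiv α v.2 v.1).hasFDerivAt)
    (.of_forall fun v =>
      ((hg.uncurry_left v.1).integral_hasStrictDerivAt α v.2).hasDerivAt.hasFDerivAt)
    (hcont (continuous_parametric_primitive_of_continuous hg')).continuousAt
    (hcont hg).continuousAt
  have hcomp := hG.hasFDerivAt.comp_hasDerivAt a₀ ((hasDerivAt_id a₀).prodMk hx)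
  simpa [HasUncurry.uncurry, comp_def, mul_comm] using hcomp

end ParametricIntegral

noncomputable def lowerRoot (A : ℝ) : ℝ := A - √(A ^ 2 - 1)

noncomputable def rootMoment (j n : ℕ) (A : ℝ) : ℝ :=
  ∫ t in (0:ℝ)..lowerRoot A, t ^ j * (t ^ 2 - 2 * A * t + 1) ^ n

lemma lowerRoot_pos {A : ℝ} (hA : 0 < A) : 0 < lowerRoot A := by
  rw [lowerRoot, sub_pos, Real.sqrt_lt' hA]
  linarith

lemma lowerRoot_isRoot {A : ℝ} (hA : 1 ≤ A ^ 2) :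
    lowerRoot A ^ 2 - 2 * A * lowerRoot A + 1 = 0 := by
  rw [lowerRoot]
  linear_combination Real.sq_sqrt (sub_nonneg.2 hA)

lemma differentiableAt_lowerRoot {A : ℝ} (hA : A ^ 2 ≠ 1) : DifferentiableAt ℝ lowerRoot A :=
  differentiableAt_id.sub ((differentiableAt_id.pow 2).sub_const 1 |>.sqrt (sub_ne_zero.2 hA))

lemma hasDerivAt_rootMoment (j n : ℕ) {A : ℝ} (hA : 1 < A ^ 2) :
    HasDerivAt (rootMoment j (n + 1)) (-2 * (n + 1) * rootMoment (j + 1) n A) A := by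
  have hpartial : ∀ a t : ℝ, HasDerivAt (fun a => t ^ j * (t ^ 2 - 2 * a * t + 1) ^ (n + 1))
      (-2 * (n + 1) * (t ^ (j + 1) * (t ^ 2 - 2 * a * t + 1) ^ n)) a := by
    intro a t
    have hquad : HasDerivAt (fun a => t ^ 2 - 2 * a * t + 1) (-2 * t) a := by
      simpa using ((hasDerivAt_id a).const_mul 2 |>.mul_const t |>.const_sub (t ^ 2)).add_const 1
    refine ((hquad.fun_pow (n + 1)).const_mul (t ^ j)).congr_deriv ?_
    rw [add_tsub_cancel_right]
    push_cast
    ring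
  refine (hasDerivAt_parametric_intervalIntegral_upper (by fun_prop) (by fun_prop) hpartial
    (differentiableAt_lowerRoot hA.ne').hasDerivAt 0).congr_deriv ?_
  rw [lowerRoot_isRoot hA.le, integral_const_mul]
  simp [rootMoment]

lemma iteratedDeriv_rootMoment (j n i : ℕ) {A : ℝ} (hA : 1 < A ^ 2) :
    iteratedDeriv i (rootMoment j (n + i)) A
      = (-2) ^ i * ((n + i)! / n ! : ℝ) * rootMoment (j + i) n A := by
  induction i generalizing j with
  | zero => simp [factorial_ne_zero]
  | succ i ih =>
    have hderiv : EqOn (deriv (rootMoment j (n + i + 1)))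
        (fun B => -2 * (n + i + 1 : ℕ) * rootMoment (j + 1) (n + i) B) {B : ℝ | 1 < B ^ 2} :=
      fun B hB => by exact_mod_cast (hasDerivAt_rootMoment j (n + i) hB).deriv
    rw [iteratedDeriv_succ', ← add_assoc,
      hderiv.iteratedDeriv_of_isOpen (isOpen_lt continuous_const (continuous_pow 2)) i hA,
      iteratedDeriv_const_mul_field, ih, factorial_succ, add_right_comm j 1 i, add_assoc j i 1]
    push_cast
    ring

lemma rootMoment_zero_right (j : ℕ) (A : ℝ) :
    rootMoment j 0 A = lowerRoot A ^ (j + 1) / (j + 1) := by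
  simp [rootMoment, integral_pow]

lemma integral_div_sqrt_sq_sub {f : ℝ → ℝ} (hf : Continuous f) {A : ℝ} (hA : 1 < A) :
    ∫ u in (0:ℝ)..1, f u / √(A ^ 2 - u)
      = 2 * ∫ t in (0:ℝ)..lowerRoot A, f (2 * A * t - t ^ 2) := by
  have hx : 0 < lowerRoot A := lowerRoot_pos (by linarith)
  have hxA : lowerRoot A < A := sub_lt_self A (Real.sqrt_pos.2 (by nlinarith))
  have hsqrt : ∀ t ∈ uIcc 0 (lowerRoot A), √(A ^ 2 - (2 * A * t - t ^ 2)) = A - t := by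
    intro t ht
    rw [uIcc_of_le hx.le] at ht
    rw [← Real.sqrt_sq (by linarith [ht.2] : 0 ≤ A - t)]
    ring_nf
  have hsubst := integral_comp_mul_deriv' (a := 0) (b := lowerRoot A)
    (f := fun t => 2 * A * t - t ^ 2) (f' := fun t => 2 * (A - t))
    (g := fun u => f u / √(A ^ 2 - u)) ?_ (by fun_prop) ?_
  · have hroot : 2 * A * lowerRoot A - lowerRoot A ^ 2 = 1 := by
      linear_combination -lowerRoot_isRoot (by nlinarith : 1 ≤ A ^ 2)
    simp only [mul_zero, sub_zero, ne_eq, OfNat.ofNat_ne_zero, not_false_eq_true, zero_pow, hroot]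
      at hsubst
    rw [← hsubst, ← integral_const_mul]
    refine integral_congr fun t ht => ?_
    have : A - t ≠ 0 := by
      rw [uIcc_of_le hx.le] at ht
      linarith [ht.2]
    simp only [comp_apply, hsqrt t ht]
    field_simp
  · intro t _
    refine (((hasDerivAt_id t).const_mul (2 * A)).sub (hasDerivAt_pow 2 t)).congr_deriv ?_
    norm_num
    ring
  · refine hf.continuousOn.div (by fun_prop) ?_
    rintro _ ⟨t, ht, rfl⟩
    rw [hsqrt t ht]
    rw [uIcc_of_le hx.le] at ht
    linarith [ht.2]

/-- For `q_k(A) = ∫₀¹ (1-u)^k / √(A²-u) du` and `A > 1`, the `k`-th derivative satisfies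
`q_k^{(k)}(A) = (-1)^k 2^{k+1} k! / (k+1) · (A - √(A²-1))^{k+1}`. -/
theorem qk_iteratedDeriv (k : ℕ) (A : ℝ) (hA : 1 < A) :
    iteratedDeriv k (fun B : ℝ => ∫ u in (0:ℝ)..1, (1 - u) ^ k / Real.sqrt (B ^ 2 - u)) A
      = (-1) ^ k * 2 ^ (k + 1) * (Nat.factorial k : ℝ) / (k + 1)
          * (A - Real.sqrt (A ^ 2 - 1)) ^ (k + 1) := by
  have hq : EqOn (fun B : ℝ => ∫ u in (0:ℝ)..1, (1 - u) ^ k / √(B ^ 2 - u))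
      (fun B => 2 * rootMoment 0 k B) (Ioi 1) := fun B hB => by
    dsimp only
    rw [integral_div_sqrt_sq_sub (by fun_prop) hB, rootMoment]
    congr 1
    exact integral_congr fun t _ => by ring
  have hk := iteratedDeriv_rootMoment 0 0 k (by nlinarith : 1 < A ^ 2)
  simp only [zero_add] at hk
  rw [hq.iteratedDeriv_of_isOpen isOpen_Ioi k hA, iteratedDeriv_const_mul_field, hk,
    rootMoment_zero_right, lowerRoot, neg_pow]
  field_simp
  ring
end

section
/- For each integer k ≥ 1 and real A > 1, the derivative of q_k(A) = ∫₀¹ (1−u)^k/√(A²−u) du satisfies q_k'(A) = 2 − 2k·A·q_{k−1}(A). -/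
open MeasureTheory Set
open scoped Interval

/-!
Differentiate under the integral sign: the `A`-derivative of the integrand is continuous on
`(1, ∞) × [0, 1]`, hence locally bounded. Since
`∂_A (A² - u)^(-1/2) = -2A · ∂_u (A² - u)^(-1/2)`, an integration by parts in `u` turns
`q_k'(A)` into `-2A ([(1-u)^k (A²-u)^(-1/2)]₀¹ + k q_{k-1}(A))`; the boundary term at `u = 1`
vanishes because `k ≥ 1`, and the one at `u = 0` is `-1/A`.
-/

theorem hasDerivAt_intervalIntegral_of_continuousOn {E : Type*} [NormedAddCommGroup E]
    [NormedSpace ℝ E] {F F' : ℝ → ℝ → E} {U : Set ℝ} {x₀ a b : ℝ}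
    (hU : IsOpen U) (hx₀ : x₀ ∈ U) (hF : ∀ x ∈ U, ContinuousOn (F x) [[a, b]])
    (hF' : ContinuousOn (Function.uncurry F') (U ×ˢ [[a, b]]))
    (hdiff : ∀ x ∈ U, ∀ t ∈ [[a, b]], HasDerivAt (F · t) (F' x t) x) :
    HasDerivAt (fun x => ∫ t in a..b, F x t) (∫ t in a..b, F' x₀ t) x₀ := by
  obtain ⟨K, hK_nhds, hKU, hK⟩ := local_compact_nhds (hU.mem_nhds hx₀)
  obtain ⟨C, hC⟩ := (hK.prod isCompact_uIcc).exists_bound_of_continuousOn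
    (hF'.mono (prod_mono hKU subset_rfl))
  have hF'x₀ : ContinuousOn (F' x₀) [[a, b]] :=
    hF'.comp (continuousOn_const.prodMk continuousOn_id) fun _ ht => ⟨hx₀, ht⟩
  refine (intervalIntegral.hasDerivAt_integral_of_dominated_loc_of_deriv_le (bound := fun _ => C)
    hK_nhds ?_ ((hF x₀ hx₀).intervalIntegrable) ?_ ?_ intervalIntegrable_const ?_).2
  · filter_upwards [hU.mem_nhds hx₀] with x hx
    exact ((hF x hx).mono uIoc_subset_uIcc).aestronglyMeasurable measurableSet_uIoc
  · exact (hF'x₀.mono uIoc_subset_uIcc).aestronglyMeasurable measurableSet_uIoc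
  · exact ae_of_all _ fun t ht x hx => hC (x, t) ⟨hx, uIoc_subset_uIcc ht⟩
  · exact ae_of_all _ fun t ht x hx => hdiff x (hKU hx) t (uIoc_subset_uIcc ht)

theorem Real.hasDerivAt_inv_sqrt {t : ℝ} (ht : 0 < t) :
    HasDerivAt (fun s => (√s)⁻¹) (-(2 * √t ^ 3)⁻¹) t :=
  ((Real.hasDerivAt_sqrt ht.ne').inv (Real.sqrt_pos.2 ht).ne').congr_deriv <| by
    rw [Real.sq_sqrt ht.le, pow_succ, Real.sq_sqrt ht.le]
    ring

theorem integral_one_sub_pow_mul_inv_sqrt_pow_three {k : ℕ} (hk : 1 ≤ k) {a : ℝ} (ha : 1 < a) :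
    ∫ u in (0:ℝ)..1, (1 - u) ^ k * (2 * √(a - u) ^ 3)⁻¹
      = k * (∫ u in (0:ℝ)..1, (1 - u) ^ (k - 1) / √(a - u)) - (√a)⁻¹ := by
  have hpos : ∀ u ∈ [[(0:ℝ), 1]], 0 < a - u := fun u hu => by
    rw [uIcc_of_le zero_le_one] at hu; linarith [hu.2]
  have hf : ∀ u ∈ [[(0:ℝ), 1]], HasDerivAt (fun u => (1 - u) ^ k) (-(k * (1 - u) ^ (k - 1))) u :=
    fun u _ => by simpa using ((hasDerivAt_id u).const_sub 1).fun_pow k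
  have hg : ∀ u ∈ [[(0:ℝ), 1]], HasDerivAt (fun u => (√(a - u))⁻¹) ((2 * √(a - u) ^ 3)⁻¹) u :=
    fun u hu => ((Real.hasDerivAt_inv_sqrt (hpos u hu)).comp u
      ((hasDerivAt_id u).const_sub a)).congr_deriv (by ring)
  have hden : ∀ u ∈ [[(0:ℝ), 1]], 2 * √(a - u) ^ 3 ≠ 0 := fun u hu => by
    have := Real.sqrt_pos.2 (hpos u hu); positivity
  have hrest : ∫ u in (0:ℝ)..1, -(k * (1 - u) ^ (k - 1)) * (√(a - u))⁻¹
      = -(k * ∫ u in (0:ℝ)..1, (1 - u) ^ (k - 1) / √(a - u)) := by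
    rw [← intervalIntegral.integral_const_mul, ← intervalIntegral.integral_neg]
    congr 1; ext u; ring
  rw [intervalIntegral.integral_mul_deriv_eq_deriv_mul hf hg
    ((by fun_prop : Continuous fun u : ℝ => -(k * (1 - u) ^ (k - 1))).intervalIntegrable _ _)
    (ContinuousOn.intervalIntegrable (by fun_prop (disch := exact hden))), hrest]
  simp only [sub_self, zero_pow (by omega : k ≠ 0), sub_zero, one_pow]
  ring

noncomputable def q (k : ℕ) (A : ℝ) : ℝ :=
  ∫ u in (0:ℝ)..1, (1 - u) ^ k / √(A ^ 2 - u)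

theorem hasDerivAt_q (k : ℕ) {A : ℝ} (hA : 1 < A) :
    HasDerivAt (q k) (-(2 * A) * ∫ u in (0:ℝ)..1, (1 - u) ^ k * (2 * √(A ^ 2 - u) ^ 3)⁻¹) A := by
  have hpos : ∀ x ∈ Ioi (1:ℝ), ∀ u ∈ [[(0:ℝ), 1]], 0 < x ^ 2 - u := fun x hx u hu => by
    rw [uIcc_of_le zero_le_one] at hu
    nlinarith [hu.2, mem_Ioi.1 hx]
  have hsqrt_ne : ∀ x ∈ Ioi (1:ℝ), ∀ u ∈ [[(0:ℝ), 1]], √(x ^ 2 - u) ≠ 0 :=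
    fun x hx u hu => (Real.sqrt_pos.2 (hpos x hx u hu)).ne'
  refine (hasDerivAt_intervalIntegral_of_continuousOn
    (F := fun x u => (1 - u) ^ k / √(x ^ 2 - u))
    (F' := fun x u => (1 - u) ^ k * (-(2 * √(x ^ 2 - u) ^ 3)⁻¹ * (2 * x))) isOpen_Ioi hA
    (fun x hx => by fun_prop (disch := exact hsqrt_ne x hx))
    ?_ ?_).congr_deriv ?_
  · have hden : ∀ p ∈ Ioi (1:ℝ) ×ˢ [[(0:ℝ), 1]], 2 * √(p.1 ^ 2 - p.2) ^ 3 ≠ 0 := fun p hp =>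
      mul_ne_zero two_ne_zero (pow_ne_zero 3 (hsqrt_ne p.1 hp.1 p.2 hp.2))
    fun_prop (disch := exact hden)
  · intro x hx u hu
    have hsq : HasDerivAt (fun x => x ^ 2 - u) (2 * x) x := by
      simpa using (hasDerivAt_pow 2 x).sub_const u
    simpa only [div_eq_mul_inv, Function.comp_def] using
      ((Real.hasDerivAt_inv_sqrt (hpos x hx u hu)).comp x hsq).const_mul ((1 - u) ^ k)
  · rw [← intervalIntegral.integral_const_mul]
    congr 1; ext u; ring

/-- Derivative identity for `q_k(A) = ∫₀¹ (1-u)^k / √(A²-u) du`: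
`q_k'(A) = 2 - 2kA q_{k-1}(A)` for `k ≥ 1`, `A > 1`. -/
theorem qk_deriv (k : ℕ) (hk : 1 ≤ k) (A : ℝ) (hA : 1 < A) :
    deriv (fun B : ℝ => ∫ u in (0:ℝ)..1, (1 - u) ^ k / Real.sqrt (B ^ 2 - u)) A
      = 2 - 2 * k * A * ∫ u in (0:ℝ)..1, (1 - u) ^ (k - 1) / Real.sqrt (A ^ 2 - u) := by
  change deriv (q k) A = _
  rw [(hasDerivAt_q k hA).deriv,
    integral_one_sub_pow_mul_inv_sqrt_pow_three hk (one_lt_pow₀ hA two_ne_zero),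
    Real.sqrt_sq (by linarith)]
  field_simp
  ring
end

section
/- Let x > 0 and 0 < y < π/2. Then A := x·sinh(x)·cos(y)·(sinh²x·cos²y − 3·cosh²x·sin²y) + y·cosh(x)·sin(y)·(3·sinh²x·cos²y − cosh²x·sin²y) − cosh(x)·cos(y)·(sinh²x + sin²y)·(sinh²x − sin²y) is strictly negative. -/
/-!
Four elementary bounds — `x < sinh x cosh x` and `sin y cos y < y` (i.e. `sinh 2x > 2x`,
`sin 2y < 2y`), `sinh x < x cosh x` and `y cos y < sin y` — suffice. Modulo
`cosh² = 1 + sinh²` and `sin² + cos² = 1`, `A` is minus a positive combination of the four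
positive gaps `sinh x cosh x - x`, `y - sin y cos y`, `x cosh x - sinh x`, `sin y - y cos y`.
-/

open Real

namespace Real

theorem self_lt_sinh_mul_cosh {x : ℝ} (hx : 0 < x) : x < sinh x * cosh x := by
  have h := self_lt_sinh_iff.2 (mul_pos two_pos hx)
  rw [sinh_two_mul] at h
  linarith

/-- By the mean value theorem `sinh x = x cosh ξ` for some `ξ ∈ (0, x)`. -/
theorem sinh_lt_mul_cosh {x : ℝ} (hx : 0 < x) : sinh x < x * cosh x := by
  obtain ⟨ξ, ⟨hξ₀, hξx⟩, hslope⟩ := exists_hasDerivAt_eq_slope sinh cosh hx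
    continuous_sinh.continuousOn fun t _ => hasDerivAt_sinh t
  rw [sinh_zero, sub_zero, sub_zero, eq_div_iff hx.ne'] at hslope
  have hcosh : cosh ξ < cosh x := cosh_lt_cosh.2 (by rwa [abs_of_pos hξ₀, abs_of_pos hx])
  rw [← hslope, mul_comm]
  exact mul_lt_mul_of_pos_left hcosh hx

theorem sin_mul_cos_lt_self {y : ℝ} (hy : 0 < y) : sin y * cos y < y := by
  have h := sin_lt (mul_pos two_pos hy)
  rw [sin_two_mul] at h
  linarith

theorem mul_cos_lt_sin {y : ℝ} (hy₀ : 0 < y) (hy₁ : y < π / 2) : y * cos y < sin y := by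
  have hcos : 0 < cos y := cos_pos_of_mem_Ioo ⟨by linarith [pi_pos], hy₁⟩
  have htan := lt_tan hy₀ hy₁
  rwa [tan_eq_sin_div_cos, lt_div_iff₀ hcos] at htan

end Real

/-- `s, c, S, C` stand for `sinh x, cosh x, sin y, cos y`. -/
theorem A_poly_neg_of_bounds {x y s c S C : ℝ} (hs : 0 < s) (hc : 0 < c) (hS : 0 < S)
    (hC : 0 < C) (hsc : c ^ 2 = 1 + s ^ 2) (hSC : S ^ 2 + C ^ 2 = 1)
    (hx₁ : x < s * c) (hy₁ : S * C < y) (hx₂ : s < x * c) (hy₂ : y * C < S) :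
    x * s * C * (s ^ 2 * C ^ 2 - 3 * c ^ 2 * S ^ 2)
      + y * c * S * (3 * s ^ 2 * C ^ 2 - c ^ 2 * S ^ 2)
      - c * C * (s ^ 2 + S ^ 2) * (s ^ 2 - S ^ 2) < 0 := by
  have hgaps : 0 < (s * c - x) * (s * S ^ 2 * C + s ^ 3 * C)
      + (y - S * C) * (c * S ^ 3 + s ^ 2 * c * S)
      + (x * c - s) * (4 * s * c * S ^ 2 * C)
      + (S - y * C) * (4 * s ^ 2 * c * S * C) := by
    have := sub_pos.2 hx₁; have := sub_pos.2 hy₁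
    have := sub_pos.2 hx₂; have := sub_pos.2 hy₂
    positivity
  have hidentity : x * s * C * (s ^ 2 * C ^ 2 - 3 * c ^ 2 * S ^ 2)
      + y * c * S * (3 * s ^ 2 * C ^ 2 - c ^ 2 * S ^ 2)
      - c * C * (s ^ 2 + S ^ 2) * (s ^ 2 - S ^ 2)
      = -((s * c - x) * (s * S ^ 2 * C + s ^ 3 * C)
          + (y - S * C) * (c * S ^ 3 + s ^ 2 * c * S)
          + (x * c - s) * (4 * s * c * S ^ 2 * C)
          + (S - y * C) * (4 * s ^ 2 * c * S * C))
        + (x * s * S ^ 2 * C - y * c * S ^ 3) * (c ^ 2 - 1 - s ^ 2)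
        + (x * s ^ 3 * C - y * s ^ 2 * c * S) * (C ^ 2 - 1 + S ^ 2) := by
    ring
  rw [hidentity, hsc, ← hSC]
  linarith

/-- The quantity `A` of (6.27) is strictly negative for `x > 0`, `0 < y < π/2`. -/
theorem A_neg (x y : ℝ) (hx : 0 < x) (hy₀ : 0 < y) (hy₁ : y < π / 2) :
    x * Real.sinh x * Real.cos y
        * (Real.sinh x ^ 2 * Real.cos y ^ 2 - 3 * Real.cosh x ^ 2 * Real.sin y ^ 2)
      + y * Real.cosh x * Real.sin y
        * (3 * Real.sinh x ^ 2 * Real.cos y ^ 2 - Real.cosh x ^ 2 * Real.sin y ^ 2)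
      - Real.cosh x * Real.cos y * (Real.sinh x ^ 2 + Real.sin y ^ 2)
        * (Real.sinh x ^ 2 - Real.sin y ^ 2) < 0 :=
  A_poly_neg_of_bounds (sinh_pos_iff.2 hx) (cosh_pos x)
    (sin_pos_of_pos_of_lt_pi hy₀ (by linarith [pi_pos]))
    (cos_pos_of_mem_Ioo ⟨by linarith [pi_pos], hy₁⟩) (cosh_sq' x) (sin_sq_add_cos_sq y)
    (self_lt_sinh_mul_cosh hx) (sin_mul_cos_lt_self hy₀) (sinh_lt_mul_cosh hx)
    (mul_cos_lt_sin hy₀ hy₁)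
end

section
/- Let 0 < β < 1 and x, y real, and set ω = β² + sinh²(x+iy) ∈ ℂ. Then |ω| ≥ |β² − sin²(y)| + sinh²(x). -/
/-! With `σ = sin² y` and `t = sinh² x`, `|β² + sinh²(x + iy)|²` is a polynomial in `β², σ, t`,
and subtracting `(|β² - σ| + t)²` leaves `4(1 - β²)tσ` when `σ ≤ β²` and `4β²t(1 - σ)` otherwise. -/

open Complex

theorem Complex.sinh_ofReal_add_ofReal_mul_I (x y : ℝ) :
    sinh (x + y * I) = (Real.sinh x * Real.cos y : ℝ) + (Real.cosh x * Real.sin y : ℝ) * I := by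
  rw [sinh_add, sinh_mul_I, cosh_mul_I]
  push_cast
  ring

theorem Complex.normSq_ofReal_add_sq_ofReal_add_ofReal_mul_I (b p q : ℝ) :
    normSq (b + (p + q * I) ^ 2) = (b + p ^ 2 - q ^ 2) ^ 2 + (2 * p * q) ^ 2 := by
  rw [show (b : ℂ) + (p + q * I) ^ 2 = (b + p ^ 2 - q ^ 2 : ℝ) + (2 * p * q : ℝ) * I by
    push_cast; linear_combination (q : ℂ) ^ 2 * I_sq, normSq_add_mul_I]

theorem sq_abs_sub_add_le {b σ t : ℝ} (hb₀ : 0 ≤ b) (hb₁ : b ≤ 1) (hσ₀ : 0 ≤ σ) (hσ₁ : σ ≤ 1)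
    (ht : 0 ≤ t) :
    (|b - σ| + t) ^ 2 ≤ (b + t * (1 - σ) - (1 + t) * σ) ^ 2 + 4 * (t * (1 - σ)) * ((1 + t) * σ) := by
  rcases abs_cases (b - σ) with ⟨habs, -⟩ | ⟨habs, -⟩ <;> rw [habs]
  · have gap : 0 ≤ 4 * (1 - b) * t * σ := by
      have := sub_nonneg.2 hb₁; positivity
    linear_combination gap
  · have gap : 0 ≤ 4 * b * t * (1 - σ) := by
      have := sub_nonneg.2 hσ₁; positivity
    linear_combination gap

theorem norm_ofReal_add_sinh_sq_sq (b x y : ℝ) :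
    ‖(b : ℂ) + sinh (x + y * I) ^ 2‖ ^ 2 =
      (b + Real.sinh x ^ 2 * (1 - Real.sin y ^ 2) - (1 + Real.sinh x ^ 2) * Real.sin y ^ 2) ^ 2
        + 4 * (Real.sinh x ^ 2 * (1 - Real.sin y ^ 2)) * ((1 + Real.sinh x ^ 2) * Real.sin y ^ 2) := by
  rw [Complex.sq_norm, sinh_ofReal_add_ofReal_mul_I, normSq_ofReal_add_sq_ofReal_add_ofReal_mul_I]
  simp only [mul_pow, Real.cos_sq', Real.cosh_sq]
  ring

theorem abs_sub_sin_sq_add_sinh_sq_le_norm {b : ℝ} (hb₀ : 0 ≤ b) (hb₁ : b ≤ 1) (x y : ℝ) :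
    |b - Real.sin y ^ 2| + Real.sinh x ^ 2 ≤ ‖(b : ℂ) + sinh (x + y * I) ^ 2‖ := by
  refine le_of_sq_le_sq ?_ (norm_nonneg _)
  rw [norm_ofReal_add_sinh_sq_sq]
  exact sq_abs_sub_add_le hb₀ hb₁ (sq_nonneg _) (Real.sin_sq_le_one y) (sq_nonneg _)

/-- For `0 < β < 1` and real `x, y`, with `ω = β² + sinh²(x+iy)`,
`|ω| ≥ |β² - sin² y| + sinh² x`. -/
theorem abs_omega_ge (β x y : ℝ) (hβ₀ : 0 < β) (hβ₁ : β < 1) :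
    |β ^ 2 - Real.sin y ^ 2| + Real.sinh x ^ 2
      ≤ ‖(β : ℂ) ^ 2 + Complex.sinh (x + y * Complex.I) ^ 2‖ := by
  have hβ_sq : β ^ 2 ≤ 1 := pow_le_one₀ hβ₀.le hβ₁.le
  exact_mod_cast abs_sub_sin_sq_add_sinh_sq_le_norm (sq_nonneg β) hβ_sq x y
end
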